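/- Let x ∈ ℝ² with 1/√(μt) − 1 ≤ |x| ≤ 1/√(μt) for some 0 < μt ≤ 1, and set Z(t,x) = (1/(4π)) ∫_{|z| ≥ 1/√(μt)} e^{−|x−z|²/4} dz. Then there is an absolute constant C > 0 such that |Z(t,x)| ≥ C. -/

import Mathlib

open MeasureTheory Real

noncomputable section

abbrev Plane := EuclideanSpace ℝ (Fin 2)

/-- `Z(t,x) = (1/(4π)) ∫_{|z| ≥ 1/√(μt)} e^{−|x−z|²/4} dz`. -/
def Zfun (μ t : ℝ) (x : Plane) : ℝ :=
  (1 / (4 * π)) * ∫ z in {z : Plane | 1 / Real.sqrt (μ * t) ≤ ‖z‖},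
    Real.exp (-‖x - z‖ ^ 2 / 4)

/-!
With `R = 1/√(μt)`, push `x` radially out to the point `p` with `‖p‖ = R + 1/2`. The ball of
radius `1/2` about `p` lies in the domain of integration `‖z‖ ≥ R`, and since `‖x‖ ≥ R - 1` every
point of it is within distance `2` of `x`, so the Gaussian is at least `e⁻¹` there. Hence `Z(t,x)`
is at least `e⁻¹ |B(0,1/2)| / (4π)`, by translation invariance of Lebesgue measure.
-/

open Metric

theorem exists_norm_eq_and_norm_sub_eq {E : Type*} [NormedAddCommGroup E] [NormedSpace ℝ E]
    [Nontrivial E] {x : E} {r : ℝ} (hr : ‖x‖ ≤ r) :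
    ∃ p : E, ‖p‖ = r ∧ ‖x - p‖ = r - ‖x‖ := by
  rcases eq_or_ne x 0 with rfl | hx
  · simpa using exists_norm_eq E ((norm_nonneg _).trans hr)
  have hx : 0 < ‖x‖ := norm_pos_iff.mpr hx
  have hrx : 0 ≤ r / ‖x‖ - 1 := by rw [sub_nonneg, one_le_div hx]; exact hr
  refine ⟨(r / ‖x‖) • x, ?_, ?_⟩
  · rw [norm_smul, norm_div, norm_norm, Real.norm_of_nonneg (hx.le.trans hr)]
    field_simp
  · rw [show x - (r / ‖x‖) • x = -((r / ‖x‖ - 1) • x) by module, norm_neg, norm_smul,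
      Real.norm_of_nonneg hrx]
    field_simp

theorem integrable_exp_neg_mul_sq_norm_sub {V : Type*} [NormedAddCommGroup V]
    [InnerProductSpace ℝ V] [FiniteDimensional ℝ V] [MeasurableSpace V] [BorelSpace V]
    {b : ℝ} (hb : 0 < b) (x : V) :
    Integrable (fun z : V => rexp (-b * ‖x - z‖ ^ 2)) := by
  have h : Integrable (fun v : V => rexp (-b * ‖v‖ ^ 2)) :=
    .of_integral_ne_zero (by rw [GaussianFourier.integral_rexp_neg_mul_sq_norm hb]; positivity)
  exact h.comp_sub_left x

theorem mul_measureReal_le_setIntegral_of_subset {X : Type*} [MeasurableSpace X]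
    {μ : Measure X} {f : X → ℝ} {B S : Set X} {c : ℝ} (hf : IntegrableOn f S μ)
    (hf₀ : ∀ z, 0 ≤ f z) (hB : MeasurableSet B) (hμB : μ B ≠ ⊤) (hBS : B ⊆ S)
    (hc : ∀ z ∈ B, c ≤ f z) :
    c * μ.real B ≤ ∫ z in S, f z ∂μ :=
  calc c * μ.real B ≤ ∫ z in B, f z ∂μ :=
        setIntegral_ge_of_const_le_real hB hμB hc (hf.mono_set hBS)
    _ ≤ ∫ z in S, f z ∂μ :=
        setIntegral_mono_set hf (.of_forall hf₀) hBS.eventuallyLE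

theorem exp_neg_one_mul_volume_ball_le_setIntegral {V : Type*} [NormedAddCommGroup V]
    [InnerProductSpace ℝ V] [FiniteDimensional ℝ V] [MeasurableSpace V] [BorelSpace V]
    {x p : V} {S : Set V} (hS : ball p (1 / 2) ⊆ S) (hxp : ‖x - p‖ ≤ 3 / 2) :
    rexp (-1) * volume.real (ball (0 : V) (1 / 2)) ≤ ∫ z in S, rexp (-‖x - z‖ ^ 2 / 4) := by
  have hint : Integrable (fun z : V => rexp (-‖x - z‖ ^ 2 / 4)) := by
    simpa [neg_div, div_eq_inv_mul] using
      integrable_exp_neg_mul_sq_norm_sub (by norm_num : (0 : ℝ) < 1 / 4) x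
  have hexp : ∀ z ∈ ball p (1 / 2), rexp (-1) ≤ rexp (-‖x - z‖ ^ 2 / 4) := by
    intro z hz
    have hxz : ‖x - z‖ ≤ 2 := by
      calc ‖x - z‖ ≤ ‖x - p‖ + ‖p - z‖ := norm_sub_le_norm_sub_add_norm_sub x p z
        _ ≤ 3 / 2 + 1 / 2 := by gcongr; rw [← dist_eq_norm, dist_comm]; exact hz.le
        _ = 2 := by norm_num
    gcongr
    nlinarith [norm_nonneg (x - z)]
  rw [← Measure.addHaar_real_ball_center volume p]
  exact mul_measureReal_le_setIntegral_of_subset hint.integrableOn (fun _ => (exp_pos _).le)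
    measurableSet_ball measure_ball_lt_top.ne hS hexp

/-- For `1/√(μt) − 1 ≤ |x| ≤ 1/√(μt)` with `0 < μt ≤ 1`, one has `|Z(t,x)| ≥ C`
for an absolute constant `C > 0` independent of `μ, t, x`. -/
theorem stmt2 :
    ∃ C > (0 : ℝ), ∀ μ t : ℝ, 0 < μ → 0 < t → μ * t ≤ 1 →
      ∀ x : Plane, 1 / Real.sqrt (μ * t) - 1 ≤ ‖x‖ → ‖x‖ ≤ 1 / Real.sqrt (μ * t) →
        C ≤ |Zfun μ t x| := by
  have hball : 0 < volume.real (ball (0 : Plane) (1 / 2)) :=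
    ENNReal.toReal_pos (measure_ball_pos volume 0 (by norm_num)).ne' measure_ball_lt_top.ne
  refine ⟨1 / (4 * π) * (rexp (-1) * volume.real (ball (0 : Plane) (1 / 2))), by positivity, ?_⟩
  intro μ t _ _ _ x hx₁ hx₂
  set R := 1 / √(μ * t)
  obtain ⟨p, hp, hxp⟩ := exists_norm_eq_and_norm_sub_eq (x := x) (r := R + 1 / 2) (by linarith)
  have hpS : ball p (1 / 2) ⊆ {z : Plane | R ≤ ‖z‖} := fun z hz => by
    have := norm_sub_norm_le p z
    rw [mem_ball, dist_eq_norm, norm_sub_rev] at hz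
    show R ≤ ‖z‖
    linarith
  have hZ := exp_neg_one_mul_volume_ball_le_setIntegral (x := x) hpS (by linarith)
  exact (mul_le_mul_of_nonneg_left hZ (by positivity)).trans (le_abs_self _)
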